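/- Let C be a counter machine and ℂ the Σ_C-Nmatrix induced by C. For all a, b ∈ ℕ_0, if a ≠ b then there exists a valuation v ∈ Val(ℂ) such that v(enc(a)) ≠ v(enc(b)). -/

import Mathlib

structure Signature where
  Conn : Type
  arity : Conn → ℕ

inductive Fm (S : Signature) : Type where
  | var : ℕ → Fm S
  | app : (c : S.Conn) → (Fin (S.arity c) → Fm S) → Fm S

def Fm.subst {S : Signature} (σ : ℕ → Fm S) : Fm S → Fm S
  | .var i => σ i
  | .app c args => .app c (fun j => (args j).subst σ)

def Fm.varsLT {S : Signature} (n : ℕ) : Fm S → Prop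
  | .var i => i < n
  | .app _ args => ∀ j, (args j).varsLT n

structure NMatrix (S : Signature) (V : Type) where
  D : Set V
  interp : (c : S.Conn) → (Fin (S.arity c) → V) → Set V
  interp_nonempty : ∀ c args, (interp c args).Nonempty

def IsVal {S : Signature} {V : Type} (M : NMatrix S V) (v : Fm S → V) : Prop :=
  ∀ (c : S.Conn) (args : Fin (S.arity c) → Fm S),
    v (Fm.app c args) ∈ M.interp c (fun i => v (args i))

def Entails {S : Signature} {V : Type} (M : NMatrix S V) (Γ : Set (Fm S)) (A : Fm S) : Prop :=
  ∀ v, IsVal M v → (∀ B ∈ Γ, v B ∈ M.D) → v A ∈ M.D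

def Interderiv {S : Signature} {V : Type} (M : NMatrix S V) (A B : Fm S) : Prop :=
  Entails M {A} B ∧ Entails M {B} A

def Deterministic {S : Signature} {V : Type} (M : NMatrix S V) : Prop :=
  ∀ c args, ∃ x, M.interp c args = {x}

inductive CMNum : Type where
  | r0 | ge0 | ge1 | ge2
deriving DecidableEq

inductive CMInstr (n : ℕ) (Q : Type) : Type where
  | inc : Fin n → Q → CMInstr n Q
  | dec : Fin n → Q → Q → CMInstr n Q

structure CounterMachine where
  n : ℕ
  Q : Type
  finQ : Finite Q
  qinit : Q
  δ : Q → Option (CMInstr n Q)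

inductive CMVal (C : CounterMachine) : Type where
  | num : CMNum → CMVal C
  | conf : C.Q → (Fin C.n → CMNum) → CMVal C
  | init : CMVal C
  | error : CMVal C

inductive CMConn (C : CounterMachine) : Type where
  | zero : CMConn C
  | eps : CMConn C
  | succ : CMConn C
  | step : C.Q → CMConn C

def CMSig (C : CounterMachine) : Signature where
  Conn := CMConn C
  arity := fun c => match c with
    | .zero => 0
    | .eps => 0
    | .succ => 1
    | .step _ => C.n + 1

/-- Interpretation of `succ` on abstract numbers. -/
def zeroNum : Set CMNum := {.r0, .ge0}

def succNum : CMNum → Set CMNum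
  | .r0 => {.ge1}
  | .ge0 => {.ge0, .ge1}
  | .ge1 => {.ge2}
  | .ge2 => {.ge2}

/-- Interpretation of `succ` in the Nmatrix induced by `C`. -/
def succC (C : CounterMachine) : CMVal C → Set (CMVal C)
  | .num x => CMVal.num '' succNum x
  | _ => {.error}

/-- Interpretation of `zero` in the Nmatrix induced by `C`. -/
def zeroC (C : CounterMachine) : Set (CMVal C) := {.num .r0, .num .ge0}

/-- The condition under which `step^q` applied to `x` and a tuple of numbers `zn`
produces the configuration value `conf q zn`. -/
def stepOK (C : CounterMachine) (q : C.Q) (x : CMVal C) (zn : Fin C.n → CMNum) : Prop :=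
  (x = CMVal.init ∧ q = C.qinit ∧ ((∀ i, zn i = .r0) ∨ (∀ i, zn i = .ge0))) ∨
  (∃ (q' : C.Q) (yn : Fin C.n → CMNum), x = CMVal.conf q' yn ∧
    ((∃ i, C.δ q' = some (.inc i q) ∧ zn i ∈ succNum (yn i) ∧ ∀ l, l ≠ i → zn l = yn l) ∨
     (∃ i s, C.δ q' = some (.dec i q s) ∧ yn i ∈ succNum (zn i) ∧ ∀ l, l ≠ i → zn l = yn l) ∨
     (∃ i s, C.δ q' = some (.dec i s q) ∧ yn i ∈ zeroNum ∧ zn = yn)))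

/-- Interpretation of `step^q` in the Nmatrix induced by `C`. -/
def stepC (C : CounterMachine) (q : C.Q) (x : CMVal C) (z : Fin C.n → CMVal C) :
    Set (CMVal C) :=
  { w | (∃ zn : Fin C.n → CMNum, (∀ i, z i = .num (zn i)) ∧ stepOK C q x zn ∧
          w = .conf q zn) ∨
        (¬ (∃ zn : Fin C.n → CMNum, (∀ i, z i = .num (zn i)) ∧ stepOK C q x zn) ∧
          w = .error) }

lemma succC_nonempty (C : CounterMachine) (x : CMVal C) : (succC C x).Nonempty := by
  cases x with
  | num y =>
      cases y
      · exact ⟨.num .ge1, by simp [succC, succNum]⟩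
      · exact ⟨.num .ge0, by simp [succC, succNum]⟩
      · exact ⟨.num .ge2, by simp [succC, succNum]⟩
      · exact ⟨.num .ge2, by simp [succC, succNum]⟩
  | conf q r => exact ⟨.error, rfl⟩
  | init => exact ⟨.error, rfl⟩
  | error => exact ⟨.error, rfl⟩

lemma stepC_nonempty (C : CounterMachine) (q : C.Q) (x : CMVal C)
    (z : Fin C.n → CMVal C) : (stepC C q x z).Nonempty := by
  by_cases h : ∃ zn : Fin C.n → CMNum, (∀ i, z i = .num (zn i)) ∧ stepOK C q x zn
  · obtain ⟨zn, hz, hok⟩ := h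
    exact ⟨.conf q zn, Or.inl ⟨zn, hz, hok, rfl⟩⟩
  · exact ⟨.error, Or.inr ⟨h, rfl⟩⟩

/-- The Nmatrix ℂ induced by the counter machine `C`. -/
def CMmatrix (C : CounterMachine) : NMatrix (CMSig C) (CMVal C) where
  D := { w | ∃ (q : C.Q) (r : Fin C.n → CMNum), w = CMVal.conf q r ∧ C.δ q = none }
  interp := fun c => match c with
    | .zero => fun _ => zeroC C
    | .eps => fun _ => {CMVal.init}
    | .succ => fun args => succC C (args ⟨0, Nat.one_pos⟩)
    | .step q => fun args => stepC C q (args ⟨0, Nat.succ_pos _⟩) (fun i => args i.succ)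
  interp_nonempty := by
    intro c args
    cases c with
    | zero => exact ⟨.num .r0, Or.inl rfl⟩
    | eps => exact ⟨.init, rfl⟩
    | succ => exact succC_nonempty C _
    | step q => exact stepC_nonempty C q _ _

/-- Encoding of natural numbers as closed formulas. -/
def enc (C : CounterMachine) : ℕ → Fm (CMSig C)
  | 0 => .app .zero (fun i => i.elim0)
  | a + 1 => .app .succ (fun _ => enc C a)

/-! Since `succ` maps `r≥0` to both `r≥0` and `r≥1`, a valuation may keep the numerals
`enc 0, …, enc m` at `r≥0` and then move on to `r≥1`, `r≥2`, `r≥2`, …; with `m = min a b`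
exactly one of `enc a`, `enc b` stays at `r≥0`. Such a valuation is built bottom-up, taking the
prescribed value at every formula where the Nmatrix allows it. -/

namespace NMatrix

variable {S : Signature} {V : Type} (M : NMatrix S V)

open Classical in
noncomputable def valPreferring (w : Fm S → V) : Fm S → V
  | .var i => w (.var i)
  | .app c args =>
      if w (.app c args) ∈ M.interp c (fun j => valPreferring w (args j)) then w (.app c args)
      else (M.interp_nonempty c fun j => valPreferring w (args j)).some

theorem isVal_valPreferring (w : Fm S → V) : IsVal M (M.valPreferring w) := by
  intro c args
  rw [valPreferring]
  split_ifs with h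
  · exact h
  · exact Set.Nonempty.some_mem _

theorem valPreferring_app {w : Fm S → V} {c : S.Conn} {args : Fin (S.arity c) → Fm S}
    (hargs : ∀ j, M.valPreferring w (args j) = w (args j))
    (hw : w (.app c args) ∈ M.interp c fun j => w (args j)) :
    M.valPreferring w (.app c args) = w (.app c args) := by
  rw [valPreferring, if_pos (by simpa only [hargs] using hw)]

end NMatrix

theorem enc_injective (C : CounterMachine) : Function.Injective (enc C) := by
  intro a b h
  induction a generalizing b with
  | zero =>
    cases b with
    | zero => rfl
    | succ b => injection h with hc; cases hc
  | succ a ih =>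
    cases b with
    | zero => injection h with hc; cases hc
    | succ b =>
      injection h with _ hargs
      exact congrArg (· + 1) (ih (congrFun hargs ⟨0, Nat.one_pos⟩))

theorem exists_isVal_enc_eq (C : CounterMachine) (p : ℕ → CMNum) (h0 : p 0 ∈ zeroNum)
    (hsucc : ∀ k, p (k + 1) ∈ succNum (p k)) :
    ∃ v : Fm (CMSig C) → CMVal C, IsVal (CMmatrix C) v ∧ ∀ k, v (enc C k) = .num (p k) := by
  let w : Fm (CMSig C) → CMVal C := fun A => .num (p (Function.invFun (enc C) A))
  have hw : ∀ k, w (enc C k) = .num (p k) := fun k => by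
    simp only [w, Function.leftInverse_invFun (enc_injective C) k]
  refine ⟨(CMmatrix C).valPreferring w, (CMmatrix C).isVal_valPreferring w, fun k => ?_⟩
  rw [← hw]
  induction k with
  | zero =>
    refine (CMmatrix C).valPreferring_app (c := .zero) (fun j => j.elim0) ?_
    change w (enc C 0) ∈ zeroC C
    rw [hw, zeroC, ← Set.image_pair]
    exact Set.mem_image_of_mem _ h0
  | succ k ih =>
    refine (CMmatrix C).valPreferring_app (c := .succ) (fun _ => ih) ?_
    change w (enc C (k + 1)) ∈ succC C (w (enc C k))
    rw [hw, hw]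
    exact Set.mem_image_of_mem _ (hsucc k)

def numProfile (m k : ℕ) : CMNum :=
  if k ≤ m then .ge0 else if k = m + 1 then .ge1 else .ge2

theorem numProfile_succ_mem (m k : ℕ) : numProfile m (k + 1) ∈ succNum (numProfile m k) := by
  unfold numProfile
  split_ifs <;> first | omega | simp [succNum]

theorem numProfile_eq_ge0_iff (m k : ℕ) : numProfile m k = .ge0 ↔ k ≤ m := by
  unfold numProfile
  split_ifs <;> simp_all

/-- For the Nmatrix ℂ induced by a counter machine C, if a ≠ b then there is
a valuation v with v(enc(a)) ≠ v(enc(b)). -/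
theorem stmt_6 (C : CounterMachine) (a b : ℕ) (h : a ≠ b) :
    ∃ v : Fm (CMSig C) → CMVal C, IsVal (CMmatrix C) v ∧
      v (enc C a) ≠ v (enc C b) := by
  obtain ⟨v, hv, henc⟩ := exists_isVal_enc_eq C (numProfile (min a b))
    (by simp [numProfile, zeroNum]) (numProfile_succ_mem _)
  refine ⟨v, hv, fun hab => h ?_⟩
  rw [henc, henc, CMVal.num.injEq] at hab
  have hle : a ≤ min a b ↔ b ≤ min a b := by
    rw [← numProfile_eq_ge0_iff, ← numProfile_eq_ge0_iff, hab]
  omega
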